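/- arXiv:2602.23154 — 4 statements merged into one kernel-verified Lean document; each statement's English description precedes it below -/
import Mathlib

section
/- Let (X,d) be a finite metric space and let k be a natural number with 1 ≤ k < |X|. Define H_{X,k} := max over subsets A ⊆ X with |A| ≤ k of the Hausdorff distance d_H(X \ A, X). Then there exist a point x ∈ X and a subset A ⊆ X with x ∈ A and |A| = k such that d(x,y) ≤ d(x,z) for every y ∈ A \ {x} and every z ∈ X \ A (that is, A consists of x together with k−1 nearest neighbors of x), and d_H(X \ A, X) = H_{X,k}. -/
/-!
Removing `B` moves each point `p` by `infDist p Bᶜ`, so `d_H(X \ B, X)` is the largest such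
distance; let `B` attain `H_{X,k}` and let `x` be a point farthest from `X \ B`. Any `k`-set
`A` made of `x` and `k − 1` nearest neighbours of `x` does at least as well: every point
outside `A` is at least as far from `x` as the points of `A`, and `A` with one such point added
has `k + 1 > |B|` elements, so it meets `X \ B`.
-/

open Metric

section NearestPoints

variable {α β : Type*} [Fintype α] [LinearOrder β]

theorem exists_card_eq_forall_mem_forall_notMem_le (f : α → β) {k : ℕ}
    (hk : k ≤ Fintype.card α) :
    ∃ A : Finset α, A.card = k ∧ ∀ y ∈ A, ∀ z ∉ A, f y ≤ f z := by
  classical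
  induction k with
  | zero => exact ⟨∅, rfl, by simp⟩
  | succ k ih =>
    obtain ⟨A, hAcard, hA⟩ := ih (by omega)
    have hAc : Aᶜ.Nonempty := by
      rw [Finset.nonempty_iff_ne_empty, Ne, Finset.compl_eq_empty_iff]
      rintro rfl
      simp at hAcard
      omega
    obtain ⟨z, hzA, hzmin⟩ := Aᶜ.exists_min_image f hAc
    rw [Finset.mem_compl] at hzA
    refine ⟨insert z A, by rw [Finset.card_insert_of_notMem hzA, hAcard], ?_⟩
    intro y hy w hw
    rw [Finset.mem_insert, not_or] at hw
    rcases Finset.mem_insert.mp hy with rfl | hyA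
    · exact hzmin w (Finset.mem_compl.mpr hw.2)
    · exact hA y hyA w hw.2

end NearestPoints

section NearestNeighbours

variable {X : Type*} [MetricSpace X]

theorem mem_of_forall_mem_forall_notMem_dist_le {x : X} {A : Finset X} (hA : A.Nonempty)
    (hnear : ∀ y ∈ A, ∀ z ∉ A, dist x y ≤ dist x z) : x ∈ A := by
  obtain ⟨y, hy⟩ := hA
  by_contra hx
  have hyx : dist x y ≤ 0 := by simpa using hnear y hy x hx
  exact hx (dist_le_zero.mp hyx ▸ hy)

theorem exists_mem_card_eq_forall_mem_forall_notMem_dist_le [Fintype X] (x : X) {k : ℕ}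
    (hk1 : 1 ≤ k) (hk2 : k ≤ Fintype.card X) :
    ∃ A : Finset X, x ∈ A ∧ A.card = k ∧ ∀ y ∈ A, ∀ z ∉ A, dist x y ≤ dist x z := by
  obtain ⟨A, hAcard, hnear⟩ := exists_card_eq_forall_mem_forall_notMem_le (dist x) hk2
  have hA : A.Nonempty := Finset.card_pos.mp (by omega)
  exact ⟨A, mem_of_forall_mem_forall_notMem_dist_le hA hnear, hAcard, hnear⟩

theorem infDist_compl_le_infDist_compl_of_card_le {x : X} {A B : Finset X}
    (hA : ((A : Set X)ᶜ).Nonempty) (hnear : ∀ y ∈ A, ∀ z ∉ A, dist x y ≤ dist x z)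
    (hBA : B.card ≤ A.card) :
    infDist x ((B : Set X)ᶜ) ≤ infDist x ((A : Set X)ᶜ) := by
  classical
  refine (le_infDist hA).mpr fun z hz => ?_
  have hzA : z ∉ A := hz
  have hnot : ¬ insert z A ⊆ B := fun h => by
    have := Finset.card_le_card h
    rw [Finset.card_insert_of_notMem hzA] at this
    omega
  obtain ⟨w, hw, hwB⟩ := Finset.not_subset.mp hnot
  calc infDist x ((B : Set X)ᶜ) ≤ dist x w := infDist_le_dist_of_mem hwB
    _ ≤ dist x z := by
      rcases Finset.mem_insert.mp hw with rfl | hwA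
      · rfl
      · exact hnear w hwA z hzA

end NearestNeighbours

section HausdorffDistToUniv

variable {X : Type*} [PseudoMetricSpace X] {s : Set X}

theorem hausdorffDist_univ_le_of_forall_infDist_le {r : ℝ} (hr : 0 ≤ r)
    (h : ∀ p, infDist p s ≤ r) : hausdorffDist s Set.univ ≤ r :=
  hausdorffDist_le_of_infDist hr (fun p _ => (infDist_zero_of_mem (Set.mem_univ p)).trans_le hr)
    fun p _ => h p

theorem infDist_le_hausdorffDist_univ [BoundedSpace X] (hs : s.Nonempty) (x : X) :
    infDist x s ≤ hausdorffDist s Set.univ := by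
  rw [hausdorffDist_comm]
  exact infDist_le_hausdorffDist_of_mem (Set.mem_univ x)
    (hausdorffEDist_ne_top_of_nonempty_of_bounded ⟨x, trivial⟩ hs
      (Bornology.IsBounded.all _) (Bornology.IsBounded.all _))

end HausdorffDistToUniv

/-- structural part of Lemma 5.4, LEM:HHstructure.
Let `(X,d)` be a finite metric space and `1 ≤ k < |X|`, and let
`H_{X,k} := max_{B ⊆ X, |B| ≤ k} d_H(X \ B, X)`. Then there are `x ∈ X` and `A ⊆ X` with
`x ∈ A`, `|A| = k`, such that `d(x,y) ≤ d(x,z)` for all `y ∈ A \ {x}` and `z ∈ X \ A`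
(`A` consists of `x` together with `k−1` nearest neighbors of `x`), and
`d_H(X \ A, X) = H_{X,k}`. -/
theorem stmt_2 {X : Type*} [MetricSpace X] [Fintype X] (k : ℕ) (hk1 : 1 ≤ k)
    (hk2 : k < Fintype.card X) :
    ∃ (x : X) (A : Finset X), x ∈ A ∧ A.card = k ∧
      (∀ y ∈ A, y ≠ x → ∀ z : X, z ∉ A → dist x y ≤ dist x z) ∧
      Metric.hausdorffDist ((↑A : Set X)ᶜ) Set.univ =
        sSup { d : ℝ | ∃ B : Finset X, B.card ≤ k ∧
          d = Metric.hausdorffDist ((↑B : Set X)ᶜ) Set.univ } := by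
  classical
  set S := { d : ℝ | ∃ B : Finset X, B.card ≤ k ∧
    d = Metric.hausdorffDist ((↑B : Set X)ᶜ) Set.univ }
  have hS : S.Finite :=
    (Set.finite_range fun B : Finset X => hausdorffDist ((B : Set X)ᶜ) Set.univ).subset
      fun _ ⟨B, _, hB⟩ => ⟨B, hB.symm⟩
  have hcompl : ∀ B : Finset X, B.card ≤ k → ((B : Set X)ᶜ).Nonempty := fun B hB => by
    rw [Set.nonempty_compl, ← Finset.coe_univ, Ne, Finset.coe_inj]
    rintro rfl
    rw [Finset.card_univ] at hB
    omega
  obtain ⟨B, hBk, hBmax⟩ := Set.Nonempty.csSup_mem (s := S) ⟨_, ∅, by simp, rfl⟩ hS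
  have : Nonempty X := Fintype.card_pos_iff.mp (by omega)
  obtain ⟨x, -, hxfar⟩ := Finset.univ.exists_max_image (infDist · ((B : Set X)ᶜ))
    Finset.univ_nonempty
  obtain ⟨A, hxA, hAcard, hnear⟩ :=
    exists_mem_card_eq_forall_mem_forall_notMem_dist_le x hk1 hk2.le
  refine ⟨x, A, hxA, hAcard, fun y hy _ => hnear y hy, le_antisymm
    (le_csSup hS.bddAbove ⟨A, hAcard.le, rfl⟩) ?_⟩
  calc sSup S = hausdorffDist ((B : Set X)ᶜ) Set.univ := hBmax
    _ ≤ infDist x ((B : Set X)ᶜ) :=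
      hausdorffDist_univ_le_of_forall_infDist_le infDist_nonneg fun p => hxfar p (Finset.mem_univ p)
    _ ≤ infDist x ((A : Set X)ᶜ) :=
      infDist_compl_le_infDist_compl_of_card_le (hcompl A hAcard.le) hnear (hAcard ▸ hBk)
    _ ≤ hausdorffDist ((A : Set X)ᶜ) Set.univ :=
      infDist_le_hausdorffDist_univ (hcompl A hAcard.le) x
end

section
/- Let (X,d) be a finite metric space and let k be a natural number with 1 ≤ k < |X|. For x ∈ X define r_k(x) := min { r ≥ 0 : |{ y ∈ X : y ≠ x and d(x,y) ≤ r }| ≥ k }. Suppose A ⊆ X with |A| = k attains the maximum of d_H(X \ B, X) over all subsets B ⊆ X with |B| ≤ k. Then there exists a ∈ A such that d_H(X \ A, X) = r_k(a). -/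
/-!
Let `a ∈ A` maximize `infDist · Aᶜ` over `A`; then `d_H(X \ A, X) = infDist a Aᶜ =: R`.
Since `A \ {a}` has only `k - 1` points, every radius `r` at which `a` has `k` neighbours
reaches a point outside `A`, so `R ≤ r_k(a)`. Conversely, if some point `x` had fewer than
`k` neighbours within distance `R`, then removing `x` together with these neighbours would
push `x` farther than `R` from the rest, contradicting the maximality of `A`; so
`r_k(x) ≤ R` for every `x`, in particular for `a`.
-/

open Metric

theorem Finset.nonempty_coe_compl_of_card_lt {X : Type*} [Fintype X] {B : Finset X}
    (h : B.card < Fintype.card X) : ((B : Set X)ᶜ).Nonempty := by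
  rw [Set.nonempty_compl, Ne, Finset.coe_eq_univ]
  exact B.card_lt_iff_ne_univ.1 h

namespace Metric

variable {X : Type*} [MetricSpace X]

theorem infDist_le_hausdorffDist_univ [BoundedSpace X] {s : Set X} (hs : s.Nonempty) (x : X) :
    infDist x s ≤ hausdorffDist s Set.univ := by
  rw [hausdorffDist_comm]
  exact infDist_le_hausdorffDist_of_mem (Set.mem_univ x)
    (hausdorffEDist_ne_top_of_nonempty_of_bounded ⟨x, Set.mem_univ x⟩ hs
      (Bornology.IsBounded.all _) (Bornology.IsBounded.all _))

theorem exists_hausdorffDist_compl_univ_eq_infDist [BoundedSpace X] {A : Finset X}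
    (hA : A.Nonempty) (hAc : ((A : Set X)ᶜ).Nonempty) :
    ∃ a ∈ A, hausdorffDist ((A : Set X)ᶜ) Set.univ = infDist a ((A : Set X)ᶜ) := by
  obtain ⟨a, haA, hamax⟩ := A.exists_max_image (fun x => infDist x ((A : Set X)ᶜ)) hA
  refine ⟨a, haA, le_antisymm ?_ (infDist_le_hausdorffDist_univ hAc a)⟩
  refine hausdorffDist_le_of_infDist infDist_nonneg
    (fun x _ => (infDist_zero_of_mem (Set.mem_univ x)).trans_le infDist_nonneg) fun x _ => ?_
  by_cases hxA : x ∈ A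
  · exact hamax x hxA
  · exact (infDist_zero_of_mem (by simpa using hxA)).trans_le infDist_nonneg

theorem lt_infDist_of_finite {s : Set X} (hs : s.Finite) (hne : s.Nonempty) {x : X} {r : ℝ}
    (h : ∀ y ∈ s, r < dist x y) : r < infDist x s := by
  obtain ⟨y, hy, hxy⟩ := hs.isCompact.exists_infDist_eq_dist hne x
  exact hxy ▸ h y hy

theorem infDist_compl_le_of_card_le_ncard {A : Finset X} {a : X} (haA : a ∈ A) {r : ℝ}
    (hcard : A.card ≤ {y : X | y ≠ a ∧ dist a y ≤ r}.ncard) :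
    infDist a ((A : Set X)ᶜ) ≤ r := by
  classical
  have hnot : ¬ {y : X | y ≠ a ∧ dist a y ≤ r} ⊆ ↑(A.erase a) := by
    intro hsub
    have hle := Set.ncard_le_ncard hsub (Finset.finite_toSet _)
    rw [Set.ncard_coe_finset, Finset.card_erase_of_mem haA] at hle
    have hpos := Finset.card_pos.2 ⟨a, haA⟩
    omega
  obtain ⟨y, ⟨hya, hay⟩, hyA'⟩ := Set.not_subset.1 hnot
  have hyA : y ∉ A := fun h => hyA' (Finset.mem_erase.2 ⟨hya, h⟩)
  exact (infDist_le_dist_of_mem (by simpa using hyA)).trans hay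

theorem le_ncard_of_forall_hausdorffDist_compl_le [Fintype X] {k : ℕ}
    (hk : k < Fintype.card X) {R : ℝ} (hR : 0 ≤ R)
    (hmax : ∀ B : Finset X, B.card ≤ k → hausdorffDist ((B : Set X)ᶜ) Set.univ ≤ R) (a : X) :
    k ≤ {y : X | y ≠ a ∧ dist a y ≤ R}.ncard := by
  classical
  set B := Finset.univ.filter (fun y => dist a y ≤ R)
  have haB : a ∈ B := by simp [B, hR]
  have hpunct : {y : X | y ≠ a ∧ dist a y ≤ R} = ↑(B.erase a) := by ext; simp [B, and_comm]
  rw [hpunct, Set.ncard_coe_finset, Finset.card_erase_of_mem haB]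
  by_contra! hlt
  have hBk : B.card ≤ k := by omega
  have hBc : ((B : Set X)ᶜ).Nonempty := Finset.nonempty_coe_compl_of_card_lt (by omega)
  have hfar : R < infDist a ((B : Set X)ᶜ) :=
    lt_infDist_of_finite (Set.toFinite _) hBc fun y hy => by simpa [B] using hy
  exact (hfar.trans_le (infDist_le_hausdorffDist_univ hBc a)).not_ge (hmax B hBk)

end Metric

/-- converse direction in the proof of Lemma 5.4, LEM:HHstructure.
Let `(X,d)` be a finite metric space, `1 ≤ k < |X|`, and for `x ∈ X` let
`r_k(x) := min { r ≥ 0 : #{ y ≠ x : d(x,y) ≤ r } ≥ k }`. If `A ⊆ X` with `|A| = k`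
attains the maximum of `d_H(X \ B, X)` over all `B ⊆ X` with `|B| ≤ k`, then there is
`a ∈ A` with `d_H(X \ A, X) = r_k(a)`. -/
theorem stmt_3 {X : Type*} [MetricSpace X] [Fintype X] (k : ℕ) (hk1 : 1 ≤ k)
    (hk2 : k < Fintype.card X) (A : Finset X) (hcard : A.card = k)
    (hmax : ∀ B : Finset X, B.card ≤ k →
      Metric.hausdorffDist ((↑B : Set X)ᶜ) Set.univ ≤
        Metric.hausdorffDist ((↑A : Set X)ᶜ) Set.univ) :
    ∃ a ∈ A, Metric.hausdorffDist ((↑A : Set X)ᶜ) Set.univ =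
      sInf { r : ℝ | 0 ≤ r ∧ k ≤ {y : X | y ≠ a ∧ dist a y ≤ r}.ncard } := by
  obtain ⟨a, haA, ha⟩ := exists_hausdorffDist_compl_univ_eq_infDist
    (Finset.card_pos.1 (hcard ▸ hk1)) (Finset.nonempty_coe_compl_of_card_lt (hcard ▸ hk2))
  refine ⟨a, haA, (IsLeast.csInf_eq ⟨?_, fun r hr => ?_⟩).symm⟩
  · exact ⟨hausdorffDist_nonneg,
      le_ncard_of_forall_hausdorffDist_compl_le hk2 hausdorffDist_nonneg hmax a⟩
  · exact ha ▸ infDist_compl_le_of_card_le_ncard haA (hcard ▸ hr.2)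
end

section
/- Let V be a finite linearly ordered set, K a finite abstract simplicial complex on V, and c a 1-cycle of K with real coefficients. If C ⊆ K^(1) is an inclusion-minimal homological edge cut for c (that is, C is a homological edge cut for c but no proper subset of C is), then there exists a 1-cochain φ : K^(1) → ℝ with support exactly C, satisfying the cocycle condition φ(∂_2 σ) = 0 for every 2-simplex σ ∈ K^(2), and φ(c) = 1. -/
open Finset

variable {V : Type*} [Fintype V] [LinearOrder V]

/-- `K` is a finite abstract simplicial complex on `V`: a collection of nonempty finite
subsets of `V` closed under passing to nonempty subsets. -/
def IsComplex (K : Finset (Finset V)) : Prop :=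
  (∀ σ ∈ K, σ.Nonempty) ∧ ∀ σ ∈ K, ∀ τ ⊆ σ, τ.Nonempty → τ ∈ K

/-- The set `K^(p)` of `p`-simplices of `K` (members of cardinality `p+1`). -/
def pSimplices (K : Finset (Finset V)) (p : ℕ) : Finset (Finset V) :=
  K.filter fun σ => σ.card = p + 1

/-- The indicator `p`-chain of a `p`-simplex `σ`. -/
def ind (F : Type*) [Zero F] [One F] (σ : Finset V) : Finset V → F :=
  fun τ => if τ = σ then 1 else 0

/-- The simplicial boundary operator on chains (with respect to the linear order on `V`):
the indicator of a simplex `{v_0 < … < v_p}` is sent to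
`Σ_{i} (−1)^i · indicator of {v_0,…,v_p} \ {v_i}`.  Equivalently, the coefficient of a
chain's boundary at a face `σ` is `Σ_{v ∉ σ} (−1)^{#{u ∈ σ : u < v}} · c (σ ∪ {v})`. -/
def bdry {F : Type*} [CommRing F] (c : Finset V → F) : Finset V → F :=
  fun σ => ∑ v ∈ σᶜ, (-1 : F) ^ (σ.filter fun u => u < v).card * c (insert v σ)

/-- Evaluation of a cochain `φ` on a chain `c`, extended bilinearly. -/
def evalC {F : Type*} [CommRing F] (φ c : Finset V → F) : F :=
  ∑ σ : Finset V, φ σ * c σ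

/-- `c` is a `p`-chain of `K`: it is supported on the `p`-simplices of `K`. -/
def suppIn {F : Type*} [Zero F] (K : Finset (Finset V)) (p : ℕ) (c : Finset V → F) : Prop :=
  ∀ σ : Finset V, c σ ≠ 0 → σ ∈ K ∧ σ.card = p + 1

/-- `c` is a `p`-cycle of `K`. -/
def IsCycleOf {F : Type*} [CommRing F] (K : Finset (Finset V)) (p : ℕ)
    (c : Finset V → F) : Prop :=
  suppIn K p c ∧ bdry c = 0

/-- Two `p`-chains are homologous in `K` if their difference is the boundary of a
`(p+1)`-chain of `K`. -/
def HomologousIn {F : Type*} [CommRing F] (K : Finset (Finset V)) (p : ℕ)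
    (c₁ c₂ : Finset V → F) : Prop :=
  ∃ b : Finset V → F, suppIn K (p + 1) b ∧ c₁ - c₂ = bdry b

/-- `K − C`: the subcomplex of all simplices of `K` having no subset belonging to `C`. -/
def deleteSimps (K C : Finset (Finset V)) : Finset (Finset V) :=
  K.filter fun σ => ∀ τ ∈ C, ¬ τ ⊆ σ

/-- `C` is a homological cut for the 1-cycle `c`: no 1-cycle of `K − C` is homologous
to `c` in `K`. -/
def IsHomCut {F : Type*} [CommRing F] (K C : Finset (Finset V)) (c : Finset V → F) : Prop :=
  ¬ ∃ z : Finset V → F, IsCycleOf (deleteSimps K C) 1 z ∧ HomologousIn K 1 z c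

/-
The cochain is a linear functional separating `c` from the subspace spanned by the boundaries of
`2`-chains of `K` and the `1`-chains vanishing on `C`. The cut property keeps `c` out of that
subspace: writing `c = ∂b + x` with `x` vanishing on `C` would make `x` a `1`-cycle of `K − C`
homologous to `c`. The functional then kills `∂_2`, vanishes off `C`, and equals `1` on `c`.
For `e ∈ C`, minimality gives a `1`-cycle `z` of `K − (C \ {e})` homologous to `c`; on it the
functional is `z e · φ e`, and also `1`, so `φ e ≠ 0`.
-/

open Submodule

section Boundary

variable {F : Type*} [CommRing F]

lemma card_filter_insert_lt {α : Type*} [LinearOrder α] {σ : Finset α} {v w : α} (hv : v ∉ σ)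
    (h : v < w) :
    ((insert v σ).filter (· < w)).card = (σ.filter (· < w)).card + 1 := by
  rw [filter_insert, if_pos h, card_insert_of_notMem fun hv' => hv (mem_of_mem_filter _ hv')]

lemma filter_insert_lt_of_le {α : Type*} [LinearOrder α] (σ : Finset α) {v w : α} (h : v ≤ w) :
    (insert w σ).filter (· < v) = σ.filter (· < v) := by
  rw [filter_insert, if_neg (not_lt.2 h)]

lemma bdry_bdry_pair_cancel {α : Type*} [LinearOrder α] (c : Finset α → F) {σ : Finset α}
    {v w : α} (hv : v ∉ σ) (h : v < w) :
    (-1 : F) ^ (σ.filter (· < v)).card *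
        ((-1) ^ ((insert v σ).filter (· < w)).card * c (insert w (insert v σ))) +
      (-1) ^ (σ.filter (· < w)).card *
        ((-1) ^ ((insert w σ).filter (· < v)).card * c (insert v (insert w σ))) = 0 := by
  rw [card_filter_insert_lt hv h, filter_insert_lt_of_le σ h.le, insert_comm]
  ring

lemma bdry_bdry (c : Finset V → F) : bdry (bdry c) = 0 := by
  funext σ
  simp only [bdry, Pi.zero_apply, mul_sum]
  rw [sum_sigma']
  refine sum_involution (fun p _ => ⟨p.2, p.1⟩) ?_ ?_ ?_ fun _ _ => rfl
  · rintro ⟨v, w⟩ hvw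
    simp only [mem_sigma, mem_compl, mem_insert, not_or] at hvw
    obtain ⟨hv, hwv, hw⟩ := hvw
    rcases lt_or_gt_of_ne (Ne.symm hwv) with h | h
    · exact bdry_bdry_pair_cancel c hv h
    · rw [add_comm]
      exact bdry_bdry_pair_cancel c hw h
  · rintro ⟨v, w⟩ hvw - h
    simp only [mem_sigma, mem_compl, mem_insert, not_or] at hvw
    exact hvw.2.1 (congrArg Sigma.fst h)
  · rintro ⟨v, w⟩ hvw
    simp only [mem_sigma, mem_compl, mem_insert, not_or] at hvw ⊢
    exact ⟨hvw.2.2, Ne.symm hvw.2.1, hvw.1⟩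

variable (F) in
def bdryLinear : (Finset V → F) →ₗ[F] (Finset V → F) where
  toFun := bdry
  map_add' x y := by
    funext σ
    simp only [bdry, Pi.add_apply, mul_add, sum_add_distrib]
  map_smul' a x := by
    funext σ
    simp only [bdry, Pi.smul_apply, smul_eq_mul, RingHom.id_apply, mul_sum, mul_left_comm]

@[simp]
lemma bdryLinear_apply (c : Finset V → F) : bdryLinear F c = bdry c := rfl

end Boundary

section Chains

variable {ι F : Type*} [CommRing F]

variable (F) in
def chainsOn (s : Set ι) : Submodule F (ι → F) where
  carrier := {c | ∀ σ ∉ s, c σ = 0}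
  add_mem' hx hy σ hσ := by simp only [Pi.add_apply, hx σ hσ, hy σ hσ, add_zero]
  zero_mem' _ _ := rfl
  smul_mem' a x hx σ hσ := by simp only [Pi.smul_apply, hx σ hσ, smul_zero]

lemma mem_chainsOn {s : Set ι} {c : ι → F} : c ∈ chainsOn F s ↔ ∀ σ ∉ s, c σ = 0 := Iff.rfl

end Chains

section Complex

variable {F : Type*} [CommRing F] {K : Finset (Finset V)}

lemma ind_mem_chainsOn {V : Type*} [LinearOrder V] {s : Set (Finset V)} {σ : Finset V}
    (hσ : σ ∈ s) : ind F σ ∈ chainsOn F s :=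
  fun τ hτ => if_neg fun h : τ = σ => hτ (h ▸ hσ)

lemma suppIn_iff_mem_chainsOn {V : Type*} {K : Finset (Finset V)} {p : ℕ} {c : Finset V → F} :
    suppIn K p c ↔ c ∈ chainsOn F ↑(pSimplices K p) := by
  simp only [suppIn, mem_chainsOn, mem_coe, pSimplices, mem_filter]
  exact forall_congr' fun σ => not_imp_comm

lemma suppIn_sub {V : Type*} {K : Finset (Finset V)} {p : ℕ} {a b : Finset V → F}
    (ha : suppIn K p a) (hb : suppIn K p b) : suppIn K p (a - b) := by
  rw [suppIn_iff_mem_chainsOn] at *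
  exact sub_mem ha hb

lemma suppIn_neg {V : Type*} {K : Finset (Finset V)} {p : ℕ} {b : Finset V → F}
    (hb : suppIn K p b) : suppIn K p (-b) := by
  rw [suppIn_iff_mem_chainsOn] at *
  exact neg_mem hb

lemma suppIn_bdry (hK : IsComplex K) {p : ℕ} {b : Finset V → F} (hb : suppIn K (p + 1) b) :
    suppIn K p (bdry b) := by
  intro σ hσ
  obtain ⟨v, hv, hne⟩ := exists_ne_zero_of_sum_ne_zero hσ
  obtain ⟨hmem, hcard⟩ := hb _ (right_ne_zero_of_mul hne)
  rw [card_insert_of_notMem (mem_compl.1 hv)] at hcard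
  exact ⟨hK.2 _ hmem σ (subset_insert _ _) (card_pos.1 (by omega)), by omega⟩

lemma suppIn_deleteSimps {C : Finset (Finset V)} (hC : C ⊆ pSimplices K 1) {x : Finset V → F}
    (hx : suppIn K 1 x) (hxC : ∀ τ ∈ C, x τ = 0) : suppIn (deleteSimps K C) 1 x := by
  intro σ hσ
  obtain ⟨hσK, hσcard⟩ := hx σ hσ
  refine ⟨mem_filter.2 ⟨hσK, fun τ hτ hτσ => hσ ?_⟩, hσcard⟩
  have hτcard : τ.card = 2 := (mem_filter.1 (hC hτ)).2
  rw [← eq_of_subset_of_card_le hτσ (by omega)]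
  exact hxC τ hτ

variable (F) in
def boundaries (K : Finset (Finset V)) (p : ℕ) : Submodule F (Finset V → F) :=
  (chainsOn F ↑(pSimplices K (p + 1))).map (bdryLinear F)

lemma bdry_mem_boundaries {p : ℕ} {b : Finset V → F} (hb : suppIn K (p + 1) b) :
    bdry b ∈ boundaries F K p :=
  mem_map_of_mem (suppIn_iff_mem_chainsOn.1 hb)

lemma notMem_boundaries_sup_chainsOn_compl (hK : IsComplex K) {c : Finset V → F}
    (hc : IsCycleOf K 1 c) {C : Finset (Finset V)} (hC : C ⊆ pSimplices K 1)
    (hcut : IsHomCut K C c) : c ∉ boundaries F K 1 ⊔ chainsOn F (↑C)ᶜ := by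
  rintro hmem
  obtain ⟨_, ⟨b, hb, rfl⟩, x, hx, hcbx⟩ := mem_sup.1 hmem
  replace hb : suppIn K 2 b := suppIn_iff_mem_chainsOn.2 hb
  have hxc : x = c - bdry b := eq_sub_of_add_eq' hcbx
  refine hcut ⟨x, ⟨suppIn_deleteSimps hC ?_ fun τ hτ => hx τ (not_not.2 hτ), ?_⟩, -b,
    suppIn_neg hb, ?_⟩
  · exact hxc ▸ suppIn_sub hc.1 (suppIn_bdry hK hb)
  · rw [hxc, ← bdryLinear_apply, map_sub, bdryLinear_apply, bdryLinear_apply, hc.2, bdry_bdry,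
      sub_zero]
  · rw [hxc, ← bdryLinear_apply (-b), map_neg, bdryLinear_apply]
    abel

lemma apply_ind_ne_zero_of_not_isHomCut_erase [Nontrivial F] {c : Finset V → F}
    {C : Finset (Finset V)} {g : (Finset V → F) →ₗ[F] F}
    (hg : ∀ y ∈ boundaries F K 1 ⊔ chainsOn F (↑C)ᶜ, g y = 0) (hgc : g c = 1) {e : Finset V}
    (hnc : ¬ IsHomCut K (C.erase e) c) : g (ind F e) ≠ 0 := by
  rw [IsHomCut, not_not] at hnc
  obtain ⟨z, ⟨hz, -⟩, b, hb, hzc⟩ := hnc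
  have hgz : g z = 1 := by
    rw [← sub_add_cancel z c, map_add, hgc, hzc, hg _ (mem_sup_left (bdry_mem_boundaries hb)),
      zero_add]
  -- On `C`, the chain `z` is supported at `e` alone.
  have hz_sub : z - z e • ind F e ∈ chainsOn F (↑C)ᶜ := by
    intro τ hτ
    rw [Set.mem_compl_iff, not_not, mem_coe] at hτ
    by_cases hτe : τ = e
    · simp [hτe, ind]
    · have hzτ : z τ = 0 := by
        by_contra hzτ
        exact (mem_filter.1 (hz τ hzτ).1).2 τ (mem_erase.2 ⟨hτe, hτ⟩) subset_rfl
      simp [hzτ, hτe, ind]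
  have := hg _ (mem_sup_right hz_sub)
  rw [map_sub, map_smul, hgz, sub_eq_zero] at this
  exact right_ne_zero_of_mul (this.symm.trans_ne one_ne_zero)

end Complex

lemma evalC_apply_ind {F : Type*} [CommRing F] (g : (Finset V → F) →ₗ[F] F)
    (x : Finset V → F) :
    evalC (fun τ => g (ind F τ)) x = g x := by
  have hx : ∑ σ : Finset V, x σ • ind F σ = x := by
    funext τ
    simp [ind, Finset.sum_apply]
  conv_rhs => rw [← hx]
  simp only [evalC, map_sum, map_smul, smul_eq_mul, mul_comm]

/-- Lemma 6.1, LEM:Cut supports cocycle.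
Let `K` be a finite abstract simplicial complex on a finite linearly ordered set `V` and `c`
a 1-cycle of `K` with real coefficients.  If `C ⊆ K^(1)` is an inclusion-minimal homological
edge cut for `c`, then there is a 1-cochain `φ` with support exactly `C`, satisfying the
cocycle condition `φ(∂_2 σ) = 0` for every 2-simplex `σ ∈ K^(2)`, and `φ(c) = 1`. -/
theorem stmt_7 {V : Type*} [Fintype V] [LinearOrder V]
    (K : Finset (Finset V)) (hK : IsComplex K) (c : Finset V → ℝ) (hc : IsCycleOf K 1 c)
    (C : Finset (Finset V)) (hC : C ⊆ pSimplices K 1) (hcut : IsHomCut K C c)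
    (hmin : ∀ C' : Finset (Finset V), C' ⊂ C → ¬ IsHomCut K C' c) :
    ∃ φ : Finset V → ℝ,
      {e : Finset V | φ e ≠ 0} = (↑C : Set (Finset V)) ∧
      (∀ σ ∈ pSimplices K 2, evalC φ (bdry (ind ℝ σ)) = 0) ∧
      evalC φ c = 1 := by
  set U := boundaries ℝ K 1 ⊔ chainsOn ℝ (↑C)ᶜ
  obtain ⟨g, hg0, hgc⟩ := LinearMap.exists_extend_of_notMem (0 : U →ₗ[ℝ] ℝ)
    (notMem_boundaries_sup_chainsOn_compl hK hc hC hcut) 1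
  have hgU : ∀ y ∈ U, g y = 0 := fun y hy => by simpa using LinearMap.congr_fun hg0 ⟨y, hy⟩
  refine ⟨fun τ => g (ind ℝ τ), ?_, fun σ hσ => ?_, by rw [evalC_apply_ind, hgc]⟩
  · ext e
    refine ⟨fun he => by_contra fun heC => he ?_, fun he =>
      apply_ind_ne_zero_of_not_isHomCut_erase hgU hgc (hmin _ (erase_ssubset he))⟩
    exact hgU _ (mem_sup_right (ind_mem_chainsOn heC))
  · rw [evalC_apply_ind]
    exact hgU _ (mem_sup_left (mem_map_of_mem (ind_mem_chainsOn (mem_coe.2 hσ))))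
end

section
/- Let V be a finite linearly ordered set, K a finite abstract simplicial complex on V, and c a 1-cycle of K with real coefficients. If φ : K^(1) → ℝ is a 1-cochain satisfying φ(∂_2 σ) = 0 for every 2-simplex σ ∈ K^(2) and φ(c) = 1, then the support Supp(φ) = {e ∈ K^(1) : φ(e) ≠ 0} is a homological edge cut for c. -/
/-! A cochain `φ` with `φ ∘ ∂₂ = 0` kills every boundary of `K`, and it kills every chain
supported off its own support. So if a cycle `z` of `K − supp φ` satisfied `z − c = ∂b`, then
`0 = φ(∂b) = φ(z) − φ(c) = −1`. -/

open Finset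

variable {V : Type*} [Fintype V] [LinearOrder V]

section Cochains

variable {F : Type*} [CommRing F]

lemma evalC_sub {W : Type*} [Fintype W] (φ a b : Finset W → F) :
    evalC φ (a - b) = evalC φ a - evalC φ b := by
  simp only [evalC, Pi.sub_apply, mul_sub, sum_sub_distrib]

lemma evalC_eq_zero_of_forall_ne_zero {W : Type*} [Fintype W] (φ z : Finset W → F)
    (h : ∀ σ, z σ ≠ 0 → φ σ = 0) : evalC φ z = 0 :=
  sum_eq_zero fun σ _ => by
    by_cases hσ : z σ = 0
    · rw [hσ, mul_zero]
    · rw [h σ hσ, zero_mul]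

lemma evalC_eq_zero_of_suppIn_deleteSimps {K C : Finset (Finset V)} {p : ℕ}
    {φ z : Finset V → F} (hC : ∀ σ ∈ pSimplices K p, φ σ ≠ 0 → σ ∈ C)
    (hz : suppIn (deleteSimps K C) p z) : evalC φ z = 0 :=
  evalC_eq_zero_of_forall_ne_zero φ z fun σ hσ => by
    obtain ⟨hσK, hσcard⟩ := hz σ hσ
    rw [deleteSimps, mem_filter] at hσK
    by_contra hφσ
    exact hσK.2 σ (hC σ (mem_filter.2 ⟨hσK.1, hσcard⟩) hφσ) subset_rfl

lemma bdry_eq_sum_ind (b : Finset V → F) (σ : Finset V) :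
    bdry b σ = ∑ τ : Finset V, b τ * bdry (ind F τ) σ := by
  simp only [bdry, ind, mul_sum]
  rw [sum_comm]
  refine sum_congr rfl fun v _ => ?_
  simp [mul_ite, mul_comm]

lemma evalC_bdry_eq_zero {K : Finset (Finset V)} {p : ℕ} {φ b : Finset V → F}
    (hφ : ∀ τ ∈ pSimplices K (p + 1), evalC φ (bdry (ind F τ)) = 0)
    (hb : suppIn K (p + 1) b) : evalC φ (bdry b) = 0 := by
  have hswap : evalC φ (bdry b) = ∑ τ : Finset V, b τ * evalC φ (bdry (ind F τ)) := by
    simp only [evalC, bdry_eq_sum_ind b, mul_sum]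
    rw [sum_comm]
    exact sum_congr rfl fun τ _ => sum_congr rfl fun σ _ => by ring
  rw [hswap]
  refine sum_eq_zero fun τ _ => ?_
  by_cases hbτ : b τ = 0
  · rw [hbτ, zero_mul]
  · rw [hφ τ (mem_filter.2 (hb τ hbτ)), mul_zero]

end Cochains

theorem stmt_8_general {V : Type*} [Fintype V] [LinearOrder V]
    (K : Finset (Finset V)) (c : Finset V → ℝ)
    (φ : Finset V → ℝ)
    (hcocycle : ∀ σ ∈ pSimplices K 2, evalC φ (bdry (ind ℝ σ)) = 0)
    (hval : evalC φ c = 1) :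
    IsHomCut K ((pSimplices K 1).filter fun e => φ e ≠ 0) c := by
  rintro ⟨z, ⟨hz, -⟩, b, hb, hzc⟩
  have hφz : evalC φ z = 0 :=
    evalC_eq_zero_of_suppIn_deleteSimps (fun σ hσ hφσ => mem_filter.2 ⟨hσ, hφσ⟩) hz
  have hφb : evalC φ (bdry b) = 0 := evalC_bdry_eq_zero hcocycle hb
  rw [← hzc, evalC_sub, hφz, hval] at hφb
  norm_num at hφb

/-- from the proof of Proposition 6.2, PROP:ell0.
Let `K` be a finite abstract simplicial complex on a finite linearly ordered set `V` and `c`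
a 1-cycle of `K` with real coefficients.  If `φ : K^(1) → ℝ` is a 1-cochain with
`φ(∂_2 σ) = 0` for every 2-simplex `σ ∈ K^(2)` and `φ(c) = 1`, then the support
`{e ∈ K^(1) : φ e ≠ 0}` of `φ` is a homological edge cut for `c`. -/
theorem stmt_8 {V : Type*} [Fintype V] [LinearOrder V]
    (K : Finset (Finset V)) (hK : IsComplex K) (c : Finset V → ℝ) (hc : IsCycleOf K 1 c)
    (φ : Finset V → ℝ)
    (hcocycle : ∀ σ ∈ pSimplices K 2, evalC φ (bdry (ind ℝ σ)) = 0)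
    (hval : evalC φ c = 1) :
    IsHomCut K ((pSimplices K 1).filter fun e => φ e ≠ 0) c :=
  stmt_8_general K c φ hcocycle hval
end
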